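/- arXiv:1909.03715 — 7 statements merged into one kernel-verified Lean document; each statement's English description precedes it below -/
import Mathlib

section
/- For every graph G without isolated vertices, χ_dd(G) ≤ χ(G) · γ(G), where χ(G) is the chromatic number and γ(G) is the domination number. -/
/-!
Colour each vertex `u` by the pair `(c u, f u)`, where `c` is an optimal proper colouring and
`f u` is a vertex of a minimum dominating set `S` that is `u` itself or a neighbour of `u`.
The class of a vertex `w ∈ S` is then the singleton `{w}`, since any other vertex `u` with
`f u = w` is adjacent to `w` and so differs from it in `c`. Every vertex `v` dominates the
singleton class of `f v`; every other class lies in the neighbourhood of its common `f`-value,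
and a singleton class is dominated by any neighbour of its vertex.
-/

open SimpleGraph

/-- A vertex `v` dominates a set `S` if every vertex of `S` is in the closed
neighborhood of `v`. -/
def Dominates {V : Type*} (G : SimpleGraph V) (v : V) (S : Set V) : Prop :=
  ∀ u ∈ S, u = v ∨ G.Adj v u

/-- A proper coloring is a dominator coloring if every vertex dominates some
(nonempty) color class. -/
def IsDominatorColoring {V : Type*} (G : SimpleGraph V) {k : ℕ}
    (c : G.Coloring (Fin k)) : Prop :=
  ∀ v : V, ∃ i : Fin k, (∃ u, c u = i) ∧ Dominates G v {u | c u = i}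

/-- A proper coloring is a dominated coloring if every nonempty color class is
dominated by some vertex (adjacent to all of its members). -/
def IsDominatedColoring {V : Type*} (G : SimpleGraph V) {k : ℕ}
    (c : G.Coloring (Fin k)) : Prop :=
  ∀ i : Fin k, (∃ u, c u = i) → ∃ v : V, ∀ u, c u = i → G.Adj v u

/-- A domination coloring: every vertex dominates a color class and every
color class is dominated by a vertex. -/
def IsDominationColoring {V : Type*} (G : SimpleGraph V) {k : ℕ}
    (c : G.Coloring (Fin k)) : Prop :=
  IsDominatorColoring G c ∧ IsDominatedColoring G c

/-- The domination chromatic number χ_dd. -/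
noncomputable def ddChromaticNumber {V : Type*} (G : SimpleGraph V) : ℕ :=
  sInf {k | ∃ c : G.Coloring (Fin k), IsDominationColoring G c}

/-- The dominator chromatic number χ_d. -/
noncomputable def dChromaticNumber {V : Type*} (G : SimpleGraph V) : ℕ :=
  sInf {k | ∃ c : G.Coloring (Fin k), IsDominatorColoring G c}

/-- The dominated chromatic number χ_dom. -/
noncomputable def domChromaticNumber {V : Type*} (G : SimpleGraph V) : ℕ :=
  sInf {k | ∃ c : G.Coloring (Fin k), IsDominatedColoring G c}

/-- A dominating set of a graph. -/
def IsDominatingSet {V : Type*} (G : SimpleGraph V) (s : Finset V) : Prop :=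
  ∀ v : V, ∃ u ∈ s, u = v ∨ G.Adj u v

/-- The domination number γ. -/
noncomputable def dominationNumber {V : Type*} (G : SimpleGraph V) : ℕ :=
  sInf {k | ∃ s : Finset V, s.card = k ∧ IsDominatingSet G s}

section

variable {V : Type*} {G : SimpleGraph V}

theorem IsDominatingSet.exists_retraction {s : Finset V} (hs : IsDominatingSet G s) :
    ∃ f : V → s, (∀ w : s, f w = w) ∧ ∀ u, (f u : V) = u ∨ G.Adj (f u) u := by
  classical
  choose g hgs hg using hs
  refine ⟨fun u => if hu : u ∈ s then ⟨u, hu⟩ else ⟨g u, hgs u⟩, fun w => by simp, fun u => ?_⟩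
  by_cases hu : u ∈ s
  · simp [hu]
  · simpa [hu] using hg u

section Refinement

variable {s : Finset V} {f : V → s} (hf_self : ∀ w : s, f w = w)
  (hf_adj : ∀ u, (f u : V) = u ∨ G.Adj (f u) u) {k : ℕ} (C : G.Coloring (Fin k))
  (hC : ∀ u u', C u = C u' → f u = f u')
include hf_self hf_adj hC

theorem eq_of_color_eq_of_mem {w u : V} (hw : w ∈ s) (hu : C u = C w) : u = w := by
  have hfu : (f u : V) = w := by rw [hC u w hu, hf_self ⟨w, hw⟩]
  rcases hf_adj u with h | h
  · rw [← h, hfu]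
  · rw [hfu] at h
    exact absurd hu.symm (C.valid h)

theorem isDominatorColoring_of_refines : IsDominatorColoring G C := by
  intro v
  refine ⟨C (f v), ⟨f v, rfl⟩, fun u hu => ?_⟩
  obtain rfl := eq_of_color_eq_of_mem hf_self hf_adj C hC (f v).2 hu
  exact (hf_adj v).imp id G.adj_symm

theorem isDominatedColoring_of_refines (hG : ∀ v : V, ∃ u, G.Adj v u) :
    IsDominatedColoring G C := by
  rintro i ⟨u₀, rfl⟩
  by_cases hw : C (f u₀) = C u₀
  · obtain ⟨x, hx⟩ := hG (f u₀)
    refine ⟨x, fun u hu => ?_⟩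
    rw [eq_of_color_eq_of_mem hf_self hf_adj C hC (f u₀).2 (hu.trans hw.symm)]
    exact hx.symm
  · refine ⟨f u₀, fun u hu => ?_⟩
    rw [← hC u u₀ hu]
    refine (hf_adj u).resolve_left fun h => hw ?_
    rw [hC u u₀ hu] at h
    rw [h, hu]

end Refinement

theorem ddChromaticNumber_le_mul_card {n : ℕ} (c : G.Coloring (Fin n)) {s : Finset V}
    (hs : IsDominatingSet G s) (hG : ∀ v : V, ∃ u, G.Adj v u) :
    ddChromaticNumber G ≤ n * s.card := by
  obtain ⟨f, hf_self, hf_adj⟩ := hs.exists_retraction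
  let C : G.Coloring (Fin (n * s.card)) :=
    Coloring.mk (fun u => finProdFinEquiv (c u, s.equivFin (f u)))
      fun hadj heq => c.valid hadj (congrArg Prod.fst (finProdFinEquiv.injective heq))
  have hC : ∀ u u', C u = C u' → f u = f u' := fun u u' heq =>
    s.equivFin.injective (congrArg Prod.snd (finProdFinEquiv.injective heq))
  exact Nat.sInf_le ⟨C, isDominatorColoring_of_refines hf_self hf_adj C hC,
    isDominatedColoring_of_refines hf_self hf_adj C hC hG⟩

variable (G) in
theorem exists_isDominatingSet_card_eq_dominationNumber [Fintype V] :
    ∃ s : Finset V, s.card = dominationNumber G ∧ IsDominatingSet G s :=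
  Nat.sInf_mem (s := {k | ∃ s : Finset V, s.card = k ∧ IsDominatingSet G s})
    ⟨_, Finset.univ, rfl, fun v => ⟨v, Finset.mem_univ v, Or.inl rfl⟩⟩

end

theorem stmt1 {V : Type*} [Fintype V] (G : SimpleGraph V)
    (h : ∀ v : V, ∃ u, G.Adj v u) :
    (ddChromaticNumber G : ℕ∞) ≤
      G.chromaticNumber * (dominationNumber G : ℕ∞) := by
  obtain ⟨s, hcard, hs⟩ := exists_isDominatingSet_card_eq_dominationNumber G
  obtain ⟨c⟩ := G.colorable_chromaticNumber_of_fintype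
  have hχ : (G.chromaticNumber.toNat : ℕ∞) = G.chromaticNumber :=
    ENat.natCast_toNat (chromaticNumber_ne_top_iff_exists.mpr ⟨_, G.colorable_of_fintype⟩)
  calc (ddChromaticNumber G : ℕ∞)
      ≤ ((G.chromaticNumber.toNat * s.card : ℕ) : ℕ∞) :=
        Nat.cast_le.mpr (ddChromaticNumber_le_mul_card c hs h)
    _ = G.chromaticNumber * (dominationNumber G : ℕ∞) := by rw [Nat.cast_mul, hχ, hcard]
end

section
/- For the complete bipartite graph K_{r,s} with r, s ≥ 1, χ_dd(K_{r,s}) = 2. -/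
open SimpleGraph

/-! The two sides of `K_{r,s}` form a domination colouring, since every vertex is adjacent to the
whole opposite side; conversely a domination colouring is in particular proper, so it uses at
least `χ(K_{r,s}) = 2` colours. -/

namespace SimpleGraph

variable {V : Type*} {G : SimpleGraph V}

theorem ddChromaticNumber_le {k : ℕ} {c : G.Coloring (Fin k)} (hc : IsDominationColoring G c) :
    ddChromaticNumber G ≤ k :=
  Nat.sInf_le ⟨c, hc⟩

theorem chromaticNumber_le_ddChromaticNumber {k : ℕ} {c : G.Coloring (Fin k)}
    (hc : IsDominationColoring G c) : G.chromaticNumber ≤ ddChromaticNumber G := by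
  obtain ⟨c', -⟩ := Nat.sInf_mem (s := {k | ∃ c : G.Coloring (Fin k), IsDominationColoring G c})
    ⟨k, c, hc⟩
  simpa [ddChromaticNumber] using c'.colorable.chromaticNumber_le

end SimpleGraph

namespace SimpleGraph.CompleteBipartiteGraph

variable {V W : Type*}

theorem adj_iff_isRight_ne {u v : V ⊕ W} :
    (completeBipartiteGraph V W).Adj u v ↔ u.isRight ≠ v.isRight := by
  cases u <;> cases v <;> simp

theorem exists_isRight_eq [Nonempty V] [Nonempty W] (b : Bool) : ∃ v : V ⊕ W, v.isRight = b := by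
  cases b
  · exact ⟨.inl (Classical.arbitrary V), rfl⟩
  · exact ⟨.inr (Classical.arbitrary W), rfl⟩

def finBicoloring (V W : Type*) : (completeBipartiteGraph V W).Coloring (Fin 2) :=
  (completeBipartiteGraph V W).recolorOfEquiv finTwoEquiv.symm (bicoloring V W)

theorem finBicoloring_eq_iff {u v : V ⊕ W} :
    finBicoloring V W u = finBicoloring V W v ↔ u.isRight = v.isRight :=
  finTwoEquiv.symm.apply_eq_iff_eq

theorem isDominationColoring_finBicoloring [Nonempty V] [Nonempty W] :
    IsDominationColoring _ (finBicoloring V W) := by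
  constructor
  · intro v
    obtain ⟨w, hw⟩ := exists_isRight_eq (V := V) (W := W) (!v.isRight)
    refine ⟨finBicoloring V W w, ⟨w, rfl⟩, fun u hu => Or.inr ?_⟩
    rw [adj_iff_isRight_ne, (finBicoloring_eq_iff.mp hu).trans hw]
    exact Bool.ne_not.mpr rfl
  · rintro i ⟨u, rfl⟩
    obtain ⟨w, hw⟩ := exists_isRight_eq (V := V) (W := W) (!u.isRight)
    refine ⟨w, fun x hx => ?_⟩
    rw [adj_iff_isRight_ne, finBicoloring_eq_iff.mp hx, hw]
    exact (Bool.ne_not.mpr rfl).symm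

end SimpleGraph.CompleteBipartiteGraph

theorem stmt10 (r s : ℕ) (hr : 1 ≤ r) (hs : 1 ≤ s) :
    ddChromaticNumber (completeBipartiteGraph (Fin r) (Fin s)) = 2 := by
  have : NeZero r := ⟨by omega⟩
  have : NeZero s := ⟨by omega⟩
  have hc := CompleteBipartiteGraph.isDominationColoring_finBicoloring (V := Fin r) (W := Fin s)
  refine le_antisymm (ddChromaticNumber_le hc) ?_
  have := chromaticNumber_le_ddChromaticNumber hc
  rwa [CompleteBipartiteGraph.chromaticNumber, ← Nat.cast_two, Nat.cast_le] at this
end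

section
/- For the wheel W_{1,n} (a cycle C_n plus a universal hub vertex), χ_dd(W_{1,n}) = 3 if n is even and χ_dd(W_{1,n}) = 4 if n is odd (n ≥ 3). -/
open SimpleGraph

/-- The wheel `W_{1,n}`: a cycle on `n` vertices plus a universal hub. -/
def wheelGraph (n : ℕ) : SimpleGraph (Option (Fin n)) where
  Adj x y :=
    match x, y with
    | none, none => False
    | none, some _ => True
    | some _, none => True
    | some i, some j => (SimpleGraph.cycleGraph n).Adj i j
  symm := by
    constructor
    intro x y h
    cases x <;> cases y <;> simp_all <;> exact ((SimpleGraph.cycleGraph n).adj_symm h)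
  loopless := by
    constructor
    intro x h
    cases x <;> simp_all <;> exact (SimpleGraph.cycleGraph n).irrefl h


lemma cyc_adj {n : ℕ} (hn : 3 ≤ n) {u v : Fin n} :
    (cycleGraph n).Adj u v ↔ (u.val + 1) % n = v.val ∨ (v.val + 1) % n = u.val := by
  obtain ⟨m, rfl⟩ : ∃ m, n = m + 2 := ⟨n - 2, by omega⟩
  rw [cycleGraph_adj]
  constructor
  · rintro (h | h)
    · right
      have h' : u = 1 + v := by rwa [sub_eq_iff_eq_add] at h
      rw [h', Fin.add_def, Fin.val_one, Nat.add_comm]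
    · left
      have h' : v = 1 + u := by rwa [sub_eq_iff_eq_add] at h
      rw [h', Fin.add_def, Fin.val_one, Nat.add_comm]
  · rintro (h | h)
    · right
      rw [sub_eq_iff_eq_add]
      refine Fin.ext ?_
      show v.val = (1 + u.val) % (m + 2)
      rw [Nat.add_comm 1]
      exact h.symm
    · left
      rw [sub_eq_iff_eq_add]
      refine Fin.ext ?_
      show u.val = (1 + v.val) % (m + 2)
      rw [Nat.add_comm 1]
      exact h.symm

lemma cyc_cases {n : ℕ} (hn : 3 ≤ n) {i j : Fin n} (h : (cycleGraph n).Adj i j) :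
    (i.val + 1 = n ∧ j.val = 0) ∨ j.val = i.val + 1 ∨
    (j.val + 1 = n ∧ i.val = 0) ∨ i.val = j.val + 1 := by
  rw [cyc_adj hn] at h
  have hi := i.isLt; have hj := j.isLt
  rcases h with h | h
  · rcases Nat.lt_or_ge (i.val + 1) n with h' | h'
    · rw [Nat.mod_eq_of_lt h'] at h; omega
    · have he : i.val + 1 = n := by omega
      rw [he, Nat.mod_self] at h; omega
  · rcases Nat.lt_or_ge (j.val + 1) n with h' | h'
    · rw [Nat.mod_eq_of_lt h'] at h; omega
    · have he : j.val + 1 = n := by omega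
      rw [he, Nat.mod_self] at h; omega

def ecf (n : ℕ) : Option (Fin n) → Fin 3
  | none => 0
  | some i => if i.val % 2 = 0 then 1 else 2

def ocf (n : ℕ) : Option (Fin n) → Fin 4
  | none => 0
  | some i => if i.val = n - 1 then 3 else if i.val % 2 = 0 then 1 else 2

lemma wheel_adj_none_some {n : ℕ} (i : Fin n) : (wheelGraph n).Adj none (some i) :=
  trivial

lemma wheel_adj_some_some {n : ℕ} {i j : Fin n} (h : (cycleGraph n).Adj i j) :
    (wheelGraph n).Adj (some i) (some j) := h

lemma domcol {n k : ℕ} (hn : 3 ≤ n) (c : (wheelGraph n).Coloring (Fin k))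
    (h0 : (c none).val = 0) (hs : ∀ i : Fin n, (c (some i)).val ≠ 0) :
    IsDominationColoring (wheelGraph n) c := by
  have hnone : ∀ u, c u = c none → u = none := by
    intro u hu
    cases u with
    | none => rfl
    | some j => exact absurd (hu ▸ h0) (hs j)
  constructor
  · intro v
    refine ⟨c none, ⟨none, rfl⟩, ?_⟩
    intro u hu
    have hu' := hnone u hu
    subst hu'
    cases v with
    | none => exact Or.inl rfl
    | some i => exact Or.inr (by exact trivial)
  · rintro i ⟨u, hu⟩
    by_cases hi : i = c none
    · refine ⟨some ⟨0, by omega⟩, ?_⟩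
      intro w hw
      have hw' := hnone w (by rw [hw, hi])
      subst hw'
      exact trivial
    · refine ⟨none, ?_⟩
      intro w hw
      cases w with
      | none => exact absurd hw.symm hi
      | some j => exact trivial

lemma three_le {n k : ℕ} (hn : 3 ≤ n) (c : (wheelGraph n).Coloring (Fin k)) : 3 ≤ k := by
  have adj01 : (wheelGraph n).Adj (some ⟨0, by omega⟩) (some ⟨1, by omega⟩) := by
    refine wheel_adj_some_some ?_
    rw [cyc_adj hn]
    left
    show (0 + 1) % n = 1
    exact Nat.mod_eq_of_lt (by omega)
  have h1 := c.valid (wheel_adj_none_some ⟨0, by omega⟩)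
  have h2 := c.valid (wheel_adj_none_some ⟨1, by omega⟩)
  have h3 := c.valid adj01
  have v1 : (c none).val ≠ (c (some ⟨0, by omega⟩)).val := fun h => h1 (Fin.val_injective h)
  have v2 : (c none).val ≠ (c (some ⟨1, by omega⟩)).val := fun h => h2 (Fin.val_injective h)
  have v3 : (c (some ⟨0, by omega⟩)).val ≠ (c (some ⟨1, by omega⟩)).val :=
    fun h => h3 (Fin.val_injective h)
  have l1 := (c none).isLt
  have l2 := (c (some ⟨0, by omega⟩)).isLt
  have l3 := (c (some ⟨1, by omega⟩)).isLt
  omega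

lemma four_le {n k : ℕ} (hn : 3 ≤ n) (hodd : n % 2 = 1)
    (c : (wheelGraph n).Coloring (Fin k)) : 4 ≤ k := by
  have h3 := three_le hn c
  by_contra h4
  have hk : k = 3 := by omega
  subst hk
  have h0n : (0 : ℕ) < n := by omega
  have h1n : (1 : ℕ) < n := by omega
  have adj01 : (wheelGraph n).Adj (some ⟨0, h0n⟩) (some ⟨1, h1n⟩) := by
    refine wheel_adj_some_some ?_
    rw [cyc_adj hn]
    left
    show (0 + 1) % n = 1
    exact Nat.mod_eq_of_lt (by omega)
  set a := c none with ha
  set f0 := c (some ⟨0, h0n⟩) with hf0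
  set f1 := c (some ⟨1, h1n⟩) with hf1
  have hne0 : f0 ≠ a := fun h => c.valid (wheel_adj_none_some ⟨0, h0n⟩) h.symm
  have hne1 : f1 ≠ a := fun h => c.valid (wheel_adj_none_some ⟨1, h1n⟩) h.symm
  have h01 : f0 ≠ f1 := c.valid adj01
  have hcover : ∀ x : Fin 3, x ≠ a → x = f0 ∨ x = f1 := by
    intro x hx
    have d0 : a.val ≠ f0.val := fun h => hne0 (Fin.val_injective h.symm)
    have d1 : a.val ≠ f1.val := fun h => hne1 (Fin.val_injective h.symm)
    have d2 : f0.val ≠ f1.val := fun h => h01 (Fin.val_injective h)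
    have dx : x.val ≠ a.val := fun h => hx (Fin.val_injective h)
    have la := a.isLt; have l0 := f0.isLt; have l1 := f1.isLt; have lx := x.isLt
    have hv : x.val = f0.val ∨ x.val = f1.val := by omega
    rcases hv with h | h
    · exact Or.inl (Fin.val_injective h)
    · exact Or.inr (Fin.val_injective h)
  have key : ∀ m, (hm : m < n) → c (some ⟨m, hm⟩) = if m % 2 = 0 then f0 else f1 := by
    intro m
    induction m with
    | zero => intro hm; simp [hf0]
    | succ m ih =>
      intro hm
      have hmn : m < n := by omega
      have adjm : (wheelGraph n).Adj (some ⟨m, hmn⟩) (some ⟨m + 1, hm⟩) := by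
        refine wheel_adj_some_some ?_
        rw [cyc_adj hn]
        left
        exact Nat.mod_eq_of_lt hm
      have hnea : c (some ⟨m + 1, hm⟩) ≠ a :=
        fun h => c.valid (wheel_adj_none_some ⟨m + 1, hm⟩) h.symm
      have hnem := c.valid adjm
      have ihm := ih hmn
      rcases hcover _ hnea with h | h
      · rw [h]
        have hp : m % 2 ≠ 0 := by
          intro he
          exact hnem (by rw [ihm, if_pos he, h])
        rw [if_pos (by omega)]
      · rw [h]
        have hp : m % 2 = 0 := by
          by_contra he
          exact hnem (by rw [ihm, if_neg he, h])
        rw [if_neg (by omega)]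
  have hlast := key (n - 1) (by omega)
  rw [if_pos (by omega)] at hlast
  have adjl : (wheelGraph n).Adj (some ⟨n - 1, by omega⟩) (some ⟨0, h0n⟩) := by
    refine wheel_adj_some_some ?_
    rw [cyc_adj hn]
    left
    show (n - 1 + 1) % n = 0
    rw [Nat.sub_add_cancel (by omega), Nat.mod_self]
  exact c.valid adjl hlast

theorem stmt11 (n : ℕ) (hn : 3 ≤ n) :
    ddChromaticNumber (wheelGraph n) = if Even n then 3 else 4 := by
  rcases Nat.even_or_odd n with he | ho
  · rw [if_pos he]
    have hev : n % 2 = 0 := Nat.even_iff.mp he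
    have hval : ∀ v w, (wheelGraph n).Adj v w → ecf n v ≠ ecf n w := by
      intro v w h
      cases v with
      | none =>
        cases w with
        | none => exact ((h : False)).elim
        | some j =>
          show (0 : Fin 3) ≠ ecf n (some j)
          simp only [ecf]
          split_ifs <;> decide
      | some i =>
        cases w with
        | none =>
          show ecf n (some i) ≠ (0 : Fin 3)
          simp only [ecf]
          split_ifs <;> decide
        | some j =>
          have hd := cyc_cases hn (h : (cycleGraph n).Adj i j)
          have hi := i.isLt; have hj := j.isLt
          show (if i.val % 2 = 0 then 1 else 2 : Fin 3) ≠
            (if j.val % 2 = 0 then 1 else 2 : Fin 3)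
          split_ifs <;> first | decide | exact absurd hd (by omega)
    have h3 : 3 ∈ {k | ∃ c : (wheelGraph n).Coloring (Fin k),
        IsDominationColoring (wheelGraph n) c} := by
      refine ⟨Coloring.mk (ecf n) (fun {v w} h => hval v w h), ?_⟩
      refine domcol hn _ rfl ?_
      intro i
      show (ecf n (some i)).val ≠ 0
      simp only [ecf]
      split_ifs <;> decide
    unfold ddChromaticNumber
    refine le_antisymm (Nat.sInf_le h3) (le_csInf ⟨3, h3⟩ ?_)
    rintro k ⟨c', -⟩
    exact three_le hn c'
  · have hod : n % 2 = 1 := Nat.odd_iff.mp ho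
    rw [if_neg (by rw [Nat.even_iff]; omega)]
    have hval : ∀ v w, (wheelGraph n).Adj v w → ocf n v ≠ ocf n w := by
      intro v w h
      cases v with
      | none =>
        cases w with
        | none => exact ((h : False)).elim
        | some j =>
          show (0 : Fin 4) ≠ ocf n (some j)
          simp only [ocf]
          split_ifs <;> decide
      | some i =>
        cases w with
        | none =>
          show ocf n (some i) ≠ (0 : Fin 4)
          simp only [ocf]
          split_ifs <;> decide
        | some j =>
          have hd := cyc_cases hn (h : (cycleGraph n).Adj i j)
          have hi := i.isLt; have hj := j.isLt
          show (if i.val = n - 1 then 3 else if i.val % 2 = 0 then 1 else 2 : Fin 4) ≠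
            (if j.val = n - 1 then 3 else if j.val % 2 = 0 then 1 else 2 : Fin 4)
          split_ifs <;> first | decide | exact absurd hd (by omega)
    have h4 : 4 ∈ {k | ∃ c : (wheelGraph n).Coloring (Fin k),
        IsDominationColoring (wheelGraph n) c} := by
      refine ⟨Coloring.mk (ocf n) (fun {v w} h => hval v w h), ?_⟩
      refine domcol hn _ rfl ?_
      intro i
      show (ocf n (some i)).val ≠ 0
      simp only [ocf]
      split_ifs <;> decide
    unfold ddChromaticNumber
    refine le_antisymm (Nat.sInf_le h4) (le_csInf ⟨4, h4⟩ ?_)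
    rintro k ⟨c', -⟩
    exact four_le hn hod c'
end

section
/- A connected graph G of order n ≥ 2 satisfies χ_dd(G) = 2 if and only if G is a complete bipartite graph K_{r,s} for some r, s ≥ 1. -/
open SimpleGraph

lemma fin2cases (a : Fin 2) : a = 0 ∨ a = 1 := by omega

lemma key_adj {V : Type*} (G : SimpleGraph V)
    (c : G.Coloring (Fin 2)) (hc : IsDominationColoring G c)
    {u v : V} (hu : c u = 0) (hv : c v = 1) : G.Adj u v := by
  obtain ⟨i, ⟨w, hw⟩, hdom⟩ := hc.1 u
  rcases fin2cases i with rfl | rfl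
  · -- u dominates class 0, so class 0 = {u}
    have hclass0 : ∀ x, c x = 0 → x = u := by
      intro x hx
      rcases hdom x hx with h | h
      · exact h
      · exact absurd (c.valid h) (by simp [hu, hx])
    obtain ⟨x, hx⟩ := hc.2 1 ⟨v, hv⟩
    have hx0 : c x = 0 := by
      rcases fin2cases (c x) with h | h
      · exact h
      · exact absurd (hx x h) G.irrefl
    rw [← hclass0 x hx0]
    exact hx v hv
  · rcases hdom v hv with h | h
    · subst h; simp [hu] at hv
    · exact h

lemma adj_iff {V : Type*} (G : SimpleGraph V)
    (c : G.Coloring (Fin 2)) (hc : IsDominationColoring G c)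
    (u v : V) : G.Adj u v ↔ c u ≠ c v := by
  constructor
  · exact fun h => c.valid h
  · intro h
    rcases fin2cases (c u) with h0 | h1 <;> rcases fin2cases (c v) with h0' | h1'
    · exact absurd (h0.trans h0'.symm) h
    · exact key_adj G c hc h0 h1'
    · exact (key_adj G c hc h0' h1).symm
    · exact absurd (h1.trans h1'.symm) h

theorem stmt12 {V : Type*} [Fintype V] (G : SimpleGraph V)
    (hn : 2 ≤ Fintype.card V) (hconn : G.Connected) :
    ddChromaticNumber G = 2 ↔
      ∃ r s : ℕ, 1 ≤ r ∧ 1 ≤ s ∧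
        Nonempty (G ≃g completeBipartiteGraph (Fin r) (Fin s)) := by
  classical
  have hne : Nonempty V := Fintype.card_pos_iff.mp (by omega)
  obtain ⟨v₀⟩ := hne
  -- no domination coloring with 0 or 1 colors
  have h0 : ¬ ∃ c : G.Coloring (Fin 0), IsDominationColoring G c := by
    rintro ⟨c, -⟩; exact (c v₀).elim0
  have h1 : ¬ ∃ c : G.Coloring (Fin 1), IsDominationColoring G c := by
    rintro ⟨c, -, h2⟩
    obtain ⟨x, hx⟩ := h2 (c v₀) ⟨v₀, rfl⟩
    exact G.irrefl (hx x (Subsingleton.elim _ _))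
  constructor
  · intro hdd
    have hSne : {k | ∃ c : G.Coloring (Fin k), IsDominationColoring G c}.Nonempty := by
      by_contra h
      rw [Set.not_nonempty_iff_eq_empty] at h
      simp [ddChromaticNumber, h] at hdd
    have hmem := Nat.sInf_mem hSne
    rw [show sInf {k | ∃ c : G.Coloring (Fin k), IsDominationColoring G c} =
        ddChromaticNumber G from rfl, hdd] at hmem
    obtain ⟨c, hc⟩ := hmem
    -- both classes nonempty
    have hadj : ∃ a b : V, G.Adj a b := by
      by_contra h
      push_neg at h
      have hbot : G = ⊥ := by ext a b; simp [h a b]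
      obtain ⟨a, b, hab⟩ := Fintype.exists_pair_of_one_lt_card (by omega : 1 < Fintype.card V)
      exact hab (SimpleGraph.reachable_bot.mp (hbot ▸ hconn.preconnected a b))
    obtain ⟨a, b, hab⟩ := hadj
    have hcab : c a ≠ c b := c.valid hab
    have hA : ∃ u, c u = 0 := by
      rcases fin2cases (c a) with h | h
      · exact ⟨a, h⟩
      · rcases fin2cases (c b) with h' | h'
        · exact ⟨b, h'⟩
        · exact absurd (h.trans h'.symm) hcab
    have hB : ∃ u, c u = 1 := by
      rcases fin2cases (c a) with h | h
      · rcases fin2cases (c b) with h' | h'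
        · exact absurd (h.trans h'.symm) hcab
        · exact ⟨b, h'⟩
      · exact ⟨a, h⟩
    have hnotiff : ∀ x : V, ¬ c x = 0 ↔ c x = 1 := by
      intro x; rcases fin2cases (c x) with h | h <;> simp [h]
    refine ⟨Fintype.card {x // c x = 0}, Fintype.card {x // c x = 1},
      Fintype.card_pos_iff.mpr ⟨⟨hA.choose, hA.choose_spec⟩⟩,
      Fintype.card_pos_iff.mpr ⟨⟨hB.choose, hB.choose_spec⟩⟩, ⟨?_⟩⟩
    refine ⟨(Equiv.sumCompl (fun x => c x = 0)).symm.trans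
      (Equiv.sumCongr (Fintype.equivFin _)
        ((Equiv.subtypeEquivRight hnotiff).trans (Fintype.equivFin _))), ?_⟩
    intro x y
    simp only [Equiv.trans_apply]
    rcases fin2cases (c x) with hx | hx <;> rcases fin2cases (c y) with hy | hy
    all_goals {
      first
      | rw [Equiv.sumCompl_symm_apply_of_pos (p := fun x => c x = 0) (a := x) hx]
      | rw [Equiv.sumCompl_symm_apply_of_neg (p := fun x => c x = 0) (a := x) ((hnotiff x).mpr hx)]
      first
      | rw [Equiv.sumCompl_symm_apply_of_pos (p := fun x => c x = 0) (a := y) hy]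
      | rw [Equiv.sumCompl_symm_apply_of_neg (p := fun x => c x = 0) (a := y) ((hnotiff y).mpr hy)]
      simp [adj_iff G c hc, hx, hy]
    }
  · rintro ⟨r, s, hr, hs, ⟨f⟩⟩
    -- build a 2-coloring from the iso
    set col : V → Fin 2 := fun v => Sum.elim (fun _ => 0) (fun _ => 1) (f v) with hcol
    have hadjiff : ∀ u v : V, G.Adj u v ↔ col u ≠ col v := by
      intro u v
      rw [← f.map_adj_iff]
      rcases hfu : f u with a | a <;> rcases hfv : f v with b | b <;>
        simp [hcol, hfu, hfv]
    let c : G.Coloring (Fin 2) := SimpleGraph.Coloring.mk col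
      (fun h => (hadjiff _ _).mp h)
    have hc0 : ∀ x : V, c x = col x := fun _ => rfl
    have hA : ∃ u, c u = 0 := by
      refine ⟨f.symm (Sum.inl ⟨0, hr⟩), ?_⟩
      rw [hc0]
      simp [hcol]
    have hB : ∃ u, c u = 1 := by
      refine ⟨f.symm (Sum.inr ⟨0, hs⟩), ?_⟩
      rw [hc0]
      simp [hcol]
    have hcdom : IsDominationColoring G c := by
      constructor
      · intro v
        rcases fin2cases (c v) with h | h
        · refine ⟨1, hB, ?_⟩
          intro u hu
          right
          exact (hadjiff v u).mpr (by rw [← hc0, ← hc0, h, hu]; simp)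
        · refine ⟨0, hA, ?_⟩
          intro u hu
          right
          exact (hadjiff v u).mpr (by rw [← hc0, ← hc0, h, hu]; simp)
      · intro i hi
        rcases fin2cases i with rfl | rfl
        · obtain ⟨w, hw⟩ := hB
          exact ⟨w, fun u hu => (hadjiff w u).mpr (by rw [← hc0, ← hc0, hw, hu]; simp)⟩
        · obtain ⟨w, hw⟩ := hA
          exact ⟨w, fun u hu => (hadjiff w u).mpr (by rw [← hc0, ← hc0, hw, hu]; simp)⟩
    have h2mem : 2 ∈ {k | ∃ c : G.Coloring (Fin k), IsDominationColoring G c} :=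
      ⟨c, hcdom⟩
    refine le_antisymm (Nat.sInf_le h2mem) ?_
    refine le_csInf ⟨2, h2mem⟩ ?_
    intro k hk
    by_contra h
    interval_cases k
    · exact h0 hk
    · exact h1 hk
end

section
/- For the Petersen graph P, χ_dd(P) = 5. -/
open SimpleGraph

/-- The Kneser graph `K(n,k)`: vertices are the `k`-subsets of an `n`-set,
adjacent iff disjoint. -/
def kneser (n k : ℕ) : SimpleGraph {s : Finset (Fin n) // s.card = k} where
  Adj x y := Disjoint x.1 y.1 ∧ x ≠ y
  symm := ⟨fun _ _ h => ⟨h.1.symm, h.2.symm⟩⟩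
  loopless := ⟨fun _ h => h.2 rfl⟩

/-- The Petersen graph is the Kneser graph `K(5,2)`. -/
def petersen : SimpleGraph {s : Finset (Fin 5) // s.card = 2} := kneser 5 2

instance : DecidableRel petersen.Adj := fun x y =>
  decidable_of_iff (Disjoint x.1 y.1 ∧ x ≠ y) Iff.rfl

lemma deg3 : ∀ v, (petersen.neighborFinset v).card = 3 := by decide

lemma common : ∀ u1 u2 v v' : {s : Finset (Fin 5) // s.card = 2}, u1 ≠ u2 →
    petersen.Adj v u1 → petersen.Adj v u2 → petersen.Adj v' u1 → petersen.Adj v' u2 → v = v' := by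
  decide

lemma card10 : Fintype.card {s : Finset (Fin 5) // s.card = 2} = 10 := by decide

lemma lower {k : ℕ} (hk : k ≤ 4) (c : petersen.Coloring (Fin k))
    (h : IsDominationColoring petersen c) : False := by
  classical
  set V := {s : Finset (Fin 5) // s.card = 2}
  let C : Fin k → Finset V := fun i => Finset.univ.filter (fun v => c v = i)
  obtain ⟨hdomr, hdomd⟩ := h
  choose g hg1 hg2 using hdomr
  let F : Fin k → Finset V := fun i => Finset.univ.filter (fun v => g v = i)
  have hC10 : ∑ i, (C i).card = 10 := by
    have := Finset.card_eq_sum_card_fiberwise (f := c) (s := Finset.univ)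
      (t := Finset.univ) (fun x _ => Finset.mem_univ _)
    rw [← this, Finset.card_univ, card10]
  have hF10 : ∑ i, (F i).card = 10 := by
    have := Finset.card_eq_sum_card_fiberwise (f := g) (s := Finset.univ)
      (t := Finset.univ) (fun x _ => Finset.mem_univ _)
    rw [← this, Finset.card_univ, card10]
  -- key: if v's dominated class is i and C i has ≥ 2 elements, v is adjacent to all of C i
  have key : ∀ i : Fin k, (C i).card ≠ 1 → ∀ v, g v = i → ∀ u, c u = i → petersen.Adj v u := by
    intro i hne v hv u hu
    have hCne : (C i).Nonempty := by
      obtain ⟨u0, hu0⟩ := hg1 v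
      exact ⟨u0, Finset.mem_filter.2 ⟨Finset.mem_univ _, hv ▸ hu0⟩⟩
    have h2 : 1 < (C i).card := by
      have := Finset.card_pos.2 hCne
      omega
    rcases hg2 v u (show c u = g v from hv ▸ hu) with he | ha
    · -- u = v : contradiction using another element of C i
      exfalso
      obtain ⟨u', hu', hne'⟩ := Finset.exists_mem_ne h2 u
      have hcu' : c u' = i := (Finset.mem_filter.1 hu').2
      rcases hg2 v u' (show c u' = g v from hv ▸ hcu') with he' | ha'
      · exact hne' (he'.trans he.symm)
      · exact c.valid ha' (by rw [← he, hu, hcu'])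
    · exact ha
  have bound1 : ∀ i : Fin k, (C i).card ≤ if (C i).card = 1 then 1 else 3 := by
    intro i
    split
    · omega
    · rcases (C i).eq_empty_or_nonempty with he | ⟨u0, hu0⟩
      · simp [he]
      · obtain ⟨v, hv⟩ := hdomd i ⟨u0, (Finset.mem_filter.1 hu0).2⟩
        have hsub : C i ⊆ petersen.neighborFinset v := by
          intro u hu
          exact (petersen.mem_neighborFinset v u).2 (hv u (Finset.mem_filter.1 hu).2)
        calc (C i).card ≤ (petersen.neighborFinset v).card := Finset.card_le_card hsub
          _ = 3 := deg3 v
  have bound2 : ∀ i : Fin k, (F i).card ≤ if (C i).card = 1 then 4 else 1 := by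
    intro i
    split
    · next h1 =>
      obtain ⟨w, hw⟩ := Finset.card_eq_one.1 h1
      have hcw : c w = i := by
        have : w ∈ C i := hw ▸ Finset.mem_singleton_self w
        exact (Finset.mem_filter.1 this).2
      have hsub : F i ⊆ insert w (petersen.neighborFinset w) := by
        intro v hv
        have hgv : g v = i := (Finset.mem_filter.1 hv).2
        rcases hg2 v w (show c w = g v from hgv ▸ hcw) with he | ha
        · exact he ▸ Finset.mem_insert_self w _
        · exact Finset.mem_insert_of_mem
            ((petersen.mem_neighborFinset w v).2 ha.symm)
      calc (F i).card ≤ (insert w (petersen.neighborFinset w)).card :=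
            Finset.card_le_card hsub
        _ ≤ (petersen.neighborFinset w).card + 1 := Finset.card_insert_le _ _
        _ = 4 := by rw [deg3]
    · next h1 =>
      refine Finset.card_le_one.2 (fun v hv v' hv' => ?_)
      have hgv : g v = i := (Finset.mem_filter.1 hv).2
      have hgv' : g v' = i := (Finset.mem_filter.1 hv').2
      have hCne : (C i).Nonempty := by
        obtain ⟨u0, hu0⟩ := hg1 v
        exact ⟨u0, Finset.mem_filter.2 ⟨Finset.mem_univ _, hgv ▸ hu0⟩⟩
      have h2 : 1 < (C i).card := by
        have := Finset.card_pos.2 hCne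
        omega
      obtain ⟨u1, hu1⟩ := hCne
      obtain ⟨u2, hu2, hne12⟩ := Finset.exists_mem_ne h2 u1
      have hc1 : c u1 = i := (Finset.mem_filter.1 hu1).2
      have hc2 : c u2 = i := (Finset.mem_filter.1 hu2).2
      exact common u2 u1 v v' hne12
        (key i h1 v hgv u2 hc2) (key i h1 v hgv u1 hc1)
        (key i h1 v' hgv' u2 hc2) (key i h1 v' hgv' u1 hc1)
  -- sum the bounds
  have hs1 : (10:ℕ) ≤ ∑ i : Fin k, if (C i).card = 1 then 1 else 3 := by
    rw [← hC10]; exact Finset.sum_le_sum (fun i _ => bound1 i)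
  have hs2 : (10:ℕ) ≤ ∑ i : Fin k, if (C i).card = 1 then 4 else 1 := by
    rw [← hF10]; exact Finset.sum_le_sum (fun i _ => bound2 i)
  set t := (Finset.univ.filter (fun i : Fin k => (C i).card = 1)).card with ht
  set s := (Finset.univ.filter (fun i : Fin k => ¬ (C i).card = 1)).card with hs
  have hts : t + s = k := by
    rw [ht, hs, Finset.card_filter_add_card_filter_not, Finset.card_univ,
      Fintype.card_fin]
  have e1 : ∑ i : Fin k, (if (C i).card = 1 then 1 else 3) = t * 1 + s * 3 := by
    rw [Finset.sum_ite, Finset.sum_const, Finset.sum_const, smul_eq_mul, smul_eq_mul]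
  have e2 : ∑ i : Fin k, (if (C i).card = 1 then 4 else 1) = t * 4 + s * 1 := by
    rw [Finset.sum_ite, Finset.sum_const, Finset.sum_const, smul_eq_mul, smul_eq_mul]
  rw [e1] at hs1
  rw [e2] at hs2
  omega

def cf (v : {s : Finset (Fin 5) // s.card = 2}) : Fin 5 :=
  if v.1 = {0,1} then 0 else if v.1 = {0,2} then 0 else if v.1 = {1,2} then 0
  else if v.1 = {0,3} then 1 else if v.1 = {0,4} then 1 else if v.1 = {3,4} then 1
  else if v.1 = {1,3} then 2 else if v.1 = {1,4} then 2
  else if v.1 = {2,3} then 3 else 4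

def pcol : petersen.Coloring (Fin 5) :=
  Coloring.mk cf (by decide)

lemma pcol_dom : IsDominationColoring petersen pcol := by
  constructor
  · simp only [IsDominatorColoring, Dominates, Set.mem_setOf_eq]; decide
  · simp only [IsDominatedColoring]; decide


theorem stmt15 : ddChromaticNumber petersen = 5 := by
  have h5 : 5 ∈ {k | ∃ c : petersen.Coloring (Fin k), IsDominationColoring petersen c} :=
    ⟨pcol, pcol_dom⟩
  have hlb : ∀ m ∈ {k | ∃ c : petersen.Coloring (Fin k), IsDominationColoring petersen c},
      5 ≤ m := by
    rintro m ⟨c, hc⟩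
    by_contra hlt
    exact lower (by omega) c hc
  exact le_antisymm (Nat.sInf_le h5)
    (hlb _ (Nat.sInf_mem (Set.nonempty_of_mem h5)))
end

section
/- For any connected triangle-free graph G, χ_dd(G) ≤ 2γ(G). -/
open SimpleGraph

theorem stmt17 {V : Type*} [Fintype V] (G : SimpleGraph V)
    (hconn : G.Connected) (hfree : G.CliqueFree 3) :
    ddChromaticNumber G ≤ 2 * dominationNumber G := by

  classical
  by_cases hiso : ∃ v : V, ∀ w, ¬ G.Adj v w
  · obtain ⟨v, hv⟩ := hiso
    have hempty : {k | ∃ c : G.Coloring (Fin k), IsDominationColoring G c} = ∅ := by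
      ext k
      simp only [Set.mem_setOf_eq, Set.mem_empty_iff_false, iff_false]
      rintro ⟨c, _, hdomd⟩
      obtain ⟨u, hu⟩ := hdomd (c v) ⟨v, rfl⟩
      exact hv u (hu v rfl).symm
    rw [ddChromaticNumber, hempty, Nat.sInf_empty]
    exact Nat.zero_le _
  push_neg at hiso
  have hne : Nonempty V := hconn.nonempty
  have hS : {k | ∃ s : Finset V, s.card = k ∧ IsDominatingSet G s}.Nonempty :=
    ⟨(Finset.univ : Finset V).card, Finset.univ, rfl,
      fun v => ⟨v, Finset.mem_univ v, Or.inl rfl⟩⟩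
  obtain ⟨D, hcard, hdom⟩ := Nat.sInf_mem hS
  set n := dominationNumber G with hn
  have hg : ∀ v : V, ∃ u : D, (u : V) = v ∨ G.Adj (u : V) v := fun v => by
    obtain ⟨u, hu, h⟩ := hdom v; exact ⟨⟨u, hu⟩, h⟩
  set g : V → D := fun v => (hg v).choose with hgdef
  have hgspec : ∀ v, ((g v : V) = v ∨ G.Adj (g v : V) v) := fun v => (hg v).choose_spec
  have hnpos : 0 < n := by
    rcases hne with ⟨v⟩
    obtain ⟨u, hu, _⟩ := hdom v
    have hcard' : D.card = n := by rw [hn, dominationNumber]; exact hcard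
    rw [← hcard']
    exact Finset.card_pos.mpr ⟨u, hu⟩
  set e : {x // x ∈ D} ≃ Fin n := D.equivFin.trans (finCongr hcard) with hedef
  set col : V → Fin (2 * n) := fun v =>
    if h : v ∈ D then ⟨(e ⟨v, h⟩ : Fin n), by have := (e ⟨v, h⟩).isLt; omega⟩
    else ⟨n + (e (g v) : Fin n), by have := (e (g v)).isLt; omega⟩ with hcoldef
  have hcolD : ∀ (v : V) (h : v ∈ D),
      col v = ⟨(e ⟨v, h⟩ : Fin n), by have := (e ⟨v, h⟩).isLt; omega⟩ := by
    intro v h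
    simp only [hcoldef, dif_pos h]
  have hcolND : ∀ (v : V), v ∉ D →
      col v = ⟨n + (e (g v) : Fin n), by have := (e (g v)).isLt; omega⟩ := by
    intro v h
    simp only [hcoldef, dif_neg h]
  have hmemD : ∀ v : V, v ∈ D ↔ (col v : ℕ) < n := by
    intro v
    constructor
    · intro h
      rw [hcolD v h]
      exact (e ⟨v, h⟩).isLt
    · intro h
      by_contra hnd
      rw [hcolND v hnd] at h
      simp at h
  -- properness
  have hproper : ∀ {v w : V}, G.Adj v w → col v ≠ col w := by
    intro v w hvw hcol
    by_cases hv : v ∈ D <;> by_cases hw : w ∈ D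
    · rw [hcolD v hv, hcolD w hw] at hcol
      have : (⟨v, hv⟩ : {x // x ∈ D}) = ⟨w, hw⟩ := e.injective (Fin.val_injective (by
        simpa using congrArg Fin.val hcol))
      have : v = w := congrArg Subtype.val this
      exact G.loopless.irrefl v (this ▸ hvw)
    · have h1 := (hmemD v).mp hv
      have h2 : ¬ (col w : ℕ) < n := fun h => hw ((hmemD w).mpr h)
      rw [hcol] at h1; exact h2 h1
    · have h1 := (hmemD w).mp hw
      have h2 : ¬ (col v : ℕ) < n := fun h => hv ((hmemD v).mpr h)
      rw [← hcol] at h1; exact h2 h1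
    · rw [hcolND v hv, hcolND w hw] at hcol
      have hval : n + ((e (g v) : Fin n) : ℕ) = n + ((e (g w) : Fin n) : ℕ) := by
        simpa using congrArg Fin.val hcol
      have hgvw : g v = g w := e.injective (Fin.val_injective (by omega))
      have hav : G.Adj (g v : V) v := by
        rcases hgspec v with h | h
        · exact absurd (h ▸ (g v).2) hv
        · exact h
      have haw : G.Adj (g v : V) w := by
        rcases hgspec w with h | h
        · exact absurd (h ▸ (g w).2) hw
        · exact hgvw ▸ h
      have : G.IsNClique 3 {(g v : V), v, w} := by
        rw [SimpleGraph.is3Clique_triple_iff]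
        exact ⟨hav, haw, hvw⟩
      exact hfree _ this
  let c : G.Coloring (Fin (2 * n)) := SimpleGraph.Coloring.mk col hproper
  have hcapp : ∀ v, c v = col v := fun v => rfl
  have hmem : 2 * n ∈ {k | ∃ c : G.Coloring (Fin k), IsDominationColoring G c} := by
    refine ⟨c, ?_, ?_⟩
    · -- dominator
      intro v
      refine ⟨col (g v : V), ⟨(g v : V), rfl⟩, ?_⟩
      intro u hu
      have hclass : u = (g v : V) := by
        have hu' : col u = col (g v : V) := hu
        have h1 : (col u : ℕ) < n := by
          rw [hu', hcolD _ (g v).2]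
          exact (e ⟨(g v : V), (g v).2⟩).isLt
        have hud : u ∈ D := (hmemD u).mpr h1
        rw [hcolD u hud, hcolD _ (g v).2] at hu'
        have : (⟨u, hud⟩ : {x // x ∈ D}) = ⟨(g v : V), (g v).2⟩ :=
          e.injective (Fin.val_injective (by simpa using congrArg Fin.val hu'))
        exact congrArg Subtype.val this
      subst hclass
      rcases hgspec v with h | h
      · exact Or.inl h
      · exact Or.inr h.symm
    · -- dominated
      intro i _
      by_cases hi : (i : ℕ) < n
      · set x := e.symm ⟨(i : ℕ), hi⟩ with hx
        obtain ⟨w, hw⟩ := hiso (x : V)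
        refine ⟨w, ?_⟩
        intro u hu
        have hu' : col u = i := hu
        have hud : u ∈ D := (hmemD u).mpr (by rw [hu']; exact hi)
        have : (⟨u, hud⟩ : {x // x ∈ D}) = x := by
          rw [hx]
          apply e.injective
          rw [Equiv.apply_symm_apply]
          apply Fin.val_injective
          have := congrArg Fin.val (hcolD u hud)
          rw [hu'] at this
          simpa using this.symm
        have huu : u = (x : V) := congrArg Subtype.val this
        rw [huu]
        exact hw.symm
      · push_neg at hi
        have hin : (i : ℕ) - n < n := by have := i.isLt; omega
        set x := e.symm ⟨(i : ℕ) - n, hin⟩ with hx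
        refine ⟨(x : V), ?_⟩
        intro u hu
        have hu' : col u = i := hu
        have hund : u ∉ D := by
          intro hud
          have := (hmemD u).mp hud
          rw [hu'] at this; omega
        have hgu : g u = x := by
          rw [hx]
          apply e.injective
          rw [Equiv.apply_symm_apply]
          apply Fin.val_injective
          have h1 : (col u : ℕ) = n + ((e (g u) : Fin n) : ℕ) := by
            rw [hcolND u hund]
          have h1' : (col u : ℕ) = (i : ℕ) := by rw [hu']
          have h2 : ((⟨(i : ℕ) - n, hin⟩ : Fin n) : ℕ) = (i : ℕ) - n := rfl
          omega
        have hav : G.Adj (g u : V) u := by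
          rcases hgspec u with h | h
          · exact absurd (h ▸ (g u).2) hund
          · exact h
        rw [← hgu]
        exact hav
  calc ddChromaticNumber G ≤ 2 * n := Nat.sInf_le hmem
    _ = 2 * dominationNumber G := by rw [hn]
end

section
/- Let K_n^m denote a graph obtained from the complete graph K_n by attaching at least one leaf to each of m distinct vertices of K_n. If m ≤ ⌊n/2⌋, then χ_dd(K_n^m) = χ(K_n^m) = n. -/
open SimpleGraph

/-- The graph obtained from `K_n` by attaching, for each leaf `l : L`, a pendant
vertex to the clique vertex `f l`. -/
def completeWithLeaves (n : ℕ) {L : Type*} (f : L → Fin n) :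
    SimpleGraph (Fin n ⊕ L) :=
  SimpleGraph.fromRel (fun x y =>
    (∃ i j : Fin n, x = Sum.inl i ∧ y = Sum.inl j) ∨
    (∃ l : L, x = Sum.inl (f l) ∧ y = Sum.inr l))


/-!
Colour each clique vertex `i` by `i` and each leaf hanging at `f l` by `σ (f l)`, where `σ` maps the
set `S` of support vertices injectively into its complement (possible because `2 |S| ≤ n`). A colour
of `S` is then used only by its clique vertex, so each leaf dominates the singleton class of its
support vertex, and so does every clique vertex. The class of a colour `σ s` consists of the clique
vertex `σ s` together with leaves hanging at `s` alone, hence is dominated by `s`; any other class is a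
singleton `{i}`, dominated by a second clique vertex since `n ≥ 2`. The clique gives `n` as a lower
bound for both numbers.
-/

open SimpleGraph

lemma ddChromaticNumber_eq_of_isDominationColoring {V : Type*} {G : SimpleGraph V} {k : ℕ}
    {c : G.Coloring (Fin k)} (hc : IsDominationColoring G c)
    (hmin : ∀ k', G.Coloring (Fin k') → k ≤ k') :
    ddChromaticNumber G = k :=
  le_antisymm (Nat.sInf_le ⟨c, hc⟩) (le_csInf ⟨k, c, hc⟩ fun _ ⟨c', _⟩ => hmin _ c')

lemma Finset.exists_injOn_forall_notMem {α : Type*} [Fintype α] [DecidableEq α] (s : Finset α)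
    (hs : 2 * s.card ≤ Fintype.card α) : ∃ σ : α → α, Set.InjOn σ s ∧ ∀ x ∈ s, σ x ∉ s := by
  obtain ⟨e⟩ : Nonempty (s ↪ (sᶜ : Finset α)) :=
    Function.Embedding.nonempty_of_card_le <| by simp; omega
  refine ⟨fun x => if hx : x ∈ s then e ⟨x, hx⟩ else x, fun x hx y hy hxy => ?_, fun x hx => ?_⟩
  · simp only [Finset.mem_coe] at hx hy
    simpa [hx, hy, Subtype.ext_iff] using hxy
  · simpa [hx] using Finset.mem_compl.mp (e ⟨x, hx⟩).2

namespace completeWithLeaves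

variable {n : ℕ} {L : Type*} {f : L → Fin n}

@[simp]
lemma adj_inl_inl {i j : Fin n} :
    (completeWithLeaves n f).Adj (Sum.inl i) (Sum.inl j) ↔ i ≠ j := by
  simp [completeWithLeaves, SimpleGraph.fromRel_adj]

@[simp]
lemma adj_inl_inr {i : Fin n} {l : L} :
    (completeWithLeaves n f).Adj (Sum.inl i) (Sum.inr l) ↔ i = f l := by
  simp [completeWithLeaves, SimpleGraph.fromRel_adj, eq_comm]

@[simp]
lemma adj_inr_inl {i : Fin n} {l : L} :
    (completeWithLeaves n f).Adj (Sum.inr l) (Sum.inl i) ↔ i = f l := by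
  rw [SimpleGraph.adj_comm, adj_inl_inr]

@[simp]
lemma not_adj_inr_inr {l l' : L} : ¬ (completeWithLeaves n f).Adj (Sum.inr l) (Sum.inr l') := by
  simp [completeWithLeaves, SimpleGraph.fromRel_adj]

lemma isClique_range_inl : (completeWithLeaves n f).IsClique (Set.range Sum.inl) := by
  rintro _ ⟨i, rfl⟩ _ ⟨j, rfl⟩ hij
  exact adj_inl_inl.mpr fun h => hij (congrArg Sum.inl h)

lemma isClique_map_inl :
    (completeWithLeaves n f).IsClique
      ((Finset.univ.map .inl : Finset (Fin n ⊕ L)) : Set (Fin n ⊕ L)) := by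
  simpa using isClique_range_inl

lemma le_of_coloring {k : ℕ} (c : (completeWithLeaves n f).Coloring (Fin k)) : n ≤ k := by
  simpa using (isClique_map_inl (f := f)).card_le_of_coloring c

lemma le_chromaticNumber : (n : ℕ∞) ≤ (completeWithLeaves n f).chromaticNumber := by
  simpa using (isClique_map_inl (f := f)).card_le_chromaticNumber

lemma dominates_inl_inl (i j : Fin n) :
    Dominates (completeWithLeaves n f) (Sum.inl i) {Sum.inl j} := by
  rintro _ rfl
  rcases eq_or_ne j i with rfl | hji
  · exact Or.inl rfl
  · exact Or.inr (adj_inl_inl.mpr hji.symm)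

lemma dominates_inr_inl (l : L) :
    Dominates (completeWithLeaves n f) (Sum.inr l) {Sum.inl (f l)} := by
  rintro _ rfl
  exact Or.inr (adj_inr_inl.mpr rfl)

def leafColoring (g : L → Fin n) (hg : ∀ l, g l ≠ f l) :
    (completeWithLeaves n f).Coloring (Fin n) :=
  Coloring.mk (Sum.elim id g) <| by
    rintro (i | l) (j | l') hadj <;> simp only [Sum.elim_inl, Sum.elim_inr, id]
    · exact adj_inl_inl.mp hadj
    · exact fun h => hg l' (h.symm.trans (adj_inl_inr.mp hadj))
    · exact fun h => hg l (h.trans (adj_inr_inl.mp hadj))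
    · exact absurd hadj not_adj_inr_inr

variable {g : L → Fin n}

@[simp]
lemma leafColoring_inl (hg : ∀ l, g l ≠ f l) (i : Fin n) :
    leafColoring g hg (Sum.inl i) = i := rfl

@[simp]
lemma leafColoring_inr (hg : ∀ l, g l ≠ f l) (l : L) :
    leafColoring g hg (Sum.inr l) = g l := rfl

lemma leafColoring_eq_iff (hg : ∀ l, g l ≠ f l) {j : Fin n} (hj : ∀ l, g l ≠ j)
    {u : Fin n ⊕ L} : leafColoring g hg u = j ↔ u = Sum.inl j := by
  rcases u with i | l
  · simp
  · simpa using hj l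

lemma isDominatorColoring_leafColoring (hgf : ∀ l l', g l ≠ f l') :
    IsDominatorColoring _ (leafColoring g fun l => hgf l l) := by
  intro v
  obtain ⟨j, hj, hdom⟩ : ∃ j, (∀ l, g l ≠ j) ∧
      Dominates (completeWithLeaves n f) v {Sum.inl j} := by
    rcases v with i | l
    · by_cases h : ∃ l, g l = i
      · obtain ⟨l, -⟩ := h
        exact ⟨f l, fun l' => hgf l' l, dominates_inl_inl i (f l)⟩
      · exact ⟨i, not_exists.mp h, dominates_inl_inl i i⟩
    · exact ⟨f l, fun l' => hgf l' l, dominates_inr_inl l⟩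
  refine ⟨j, ⟨Sum.inl j, rfl⟩, fun u hu => hdom u ?_⟩
  exact (leafColoring_eq_iff _ hj).mp hu

lemma isDominatedColoring_leafColoring (hn : 2 ≤ n) (hg : ∀ l, g l ≠ f l)
    (hinj : ∀ l l', g l = g l' → f l = f l') :
    IsDominatedColoring _ (leafColoring g hg) := by
  rintro i -
  by_cases h : ∃ l, g l = i
  · obtain ⟨l, rfl⟩ := h
    refine ⟨Sum.inl (f l), ?_⟩
    rintro (i' | l') hu <;> simp only [leafColoring_inl, leafColoring_inr] at hu
    · exact adj_inl_inl.mpr (hu ▸ (hg l).symm)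
    · exact adj_inl_inr.mpr (hinj l' l hu).symm
  · have : Nontrivial (Fin n) := Fin.nontrivial_iff_two_le.mpr hn
    obtain ⟨j, hj⟩ := exists_ne i
    refine ⟨Sum.inl j, fun u hu => ?_⟩
    rw [(leafColoring_eq_iff hg (not_exists.mp h)).mp hu]
    exact adj_inl_inl.mpr hj

end completeWithLeaves

theorem stmt19_general (n m : ℕ) (hn : 2 ≤ n) {L : Type*} [Fintype L]
    (f : L → Fin n)
    (hm : (Finset.image f Finset.univ).card = m) (hmn : m ≤ n / 2) :
    ddChromaticNumber (completeWithLeaves n f) = n ∧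
    (completeWithLeaves n f).chromaticNumber = n := by
  obtain ⟨σ, hσinj, hσ⟩ := (Finset.univ.image f).exists_injOn_forall_notMem (by simp; omega)
  have hgf : ∀ l l', σ (f l) ≠ f l' := fun l l' h => hσ (f l) (by simp) (h ▸ by simp)
  set c := completeWithLeaves.leafColoring (σ ∘ f) fun l => hgf l l
  have hc : IsDominationColoring _ c :=
    ⟨completeWithLeaves.isDominatorColoring_leafColoring hgf,
      completeWithLeaves.isDominatedColoring_leafColoring hn _
        fun l l' h => hσinj (by simp) (by simp) h⟩
  exact ⟨ddChromaticNumber_eq_of_isDominationColoring hc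
      fun _ => completeWithLeaves.le_of_coloring,
    le_antisymm (Colorable.chromaticNumber_le ⟨c⟩) completeWithLeaves.le_chromaticNumber⟩

theorem stmt19 (n m : ℕ) (hn : 2 ≤ n) {L : Type*} [Fintype L] [DecidableEq L]
    (f : L → Fin n)
    (hm : (Finset.image f Finset.univ).card = m) (hmn : m ≤ n / 2) :
    ddChromaticNumber (completeWithLeaves n f) = n ∧
    (completeWithLeaves n f).chromaticNumber = n :=
  stmt19_general n m hn f hm hmn
end
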